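/- arXiv:1107.1941 — 4 statements merged into one kernel-verified Lean document; each statement's English description precedes it below -/
import Mathlib

section
/- Let S be a maximal independent set of a finite simple graph G (an independent set such that every vertex not in S is adjacent to some vertex of S). Then the transmit matrix of S, defined by M i j := (i ∈ S and i is adjacent to j in G), is a maximal matching matrix for G, and likewise the receive matrix of S, defined by M' i j := (j ∈ S and i is adjacent to j in G), is a maximal matching matrix for G. Hence every maximal independent set induces two maximal matching matrices. -/
/-!
The transmit matrix of an independent set `S` is a matching matrix, since a vertex of `S` never
receives from another vertex of `S`. It is maximal because `S` dominates the graph: a link `i → j`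
with `i ∉ S` would make `i` receive from one of its neighbours in `S` while transmitting. The
receive matrix is the transpose of the transmit matrix, and transposition preserves (maximal)
matching matrices, because "no node transmits and receives" is symmetric in the two roles.
-/

/-- `M` is a matching matrix for the graph `G`: active links join adjacent
nodes, and no node simultaneously transmits and receives. -/
def IsMatchingMatrix {V : Type*} (G : SimpleGraph V) (M : V → V → Prop) : Prop :=
  (∀ i j, M i j → G.Adj i j) ∧ (∀ i j k, M i j → ¬ M k i)

/-- `M` is a maximal matching matrix for `G`. -/
def IsMaximalMatchingMatrix {V : Type*} (G : SimpleGraph V) (M : V → V → Prop) : Prop :=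
  IsMatchingMatrix G M ∧
    ∀ M' : V → V → Prop, IsMatchingMatrix G M' → (∀ i j, M i j → M' i j) → M' = M

/-- `S` is an independent set of `G`: no two of its vertices are adjacent. -/
def IsIndepSet {V : Type*} (G : SimpleGraph V) (S : Set V) : Prop :=
  ∀ i ∈ S, ∀ j ∈ S, ¬ G.Adj i j

/-- `S` is a maximal independent set of `G`: it is independent and every
vertex outside `S` is adjacent to some vertex of `S`. -/
def IsMaximalIndepSet {V : Type*} (G : SimpleGraph V) (S : Set V) : Prop :=
  IsIndepSet G S ∧ ∀ v ∉ S, ∃ w ∈ S, G.Adj v w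

theorem IsMatchingMatrix.flip {V : Type*} {G : SimpleGraph V} {M : V → V → Prop}
    (hM : IsMatchingMatrix G M) : IsMatchingMatrix G (flip M) :=
  ⟨fun i j hji => (hM.1 j i hji).symm, fun _ _ _ hji hik => hM.2 _ _ _ hik hji⟩

theorem IsMaximalMatchingMatrix.flip {V : Type*} {G : SimpleGraph V} {M : V → V → Prop}
    (hM : IsMaximalMatchingMatrix G M) : IsMaximalMatchingMatrix G (flip M) := by
  refine ⟨hM.1.flip, fun M' hM' hle => ?_⟩
  have hflip : _root_.flip M' = M := hM.2 _ hM'.flip fun i j h => hle j i h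
  rw [← hflip]
  rfl

section TransmitMatrix

variable {V : Type*} {G : SimpleGraph V} {S : Set V}

theorem IsIndepSet.isMatchingMatrix_transmit (hS : IsIndepSet G S) :
    IsMatchingMatrix G (fun i j => i ∈ S ∧ G.Adj i j) :=
  ⟨fun _ _ h => h.2, fun i _ k hij hki => hS k hki.1 i hij.1 hki.2⟩

theorem IsMaximalIndepSet.isMaximalMatchingMatrix_transmit (hS : IsMaximalIndepSet G S) :
    IsMaximalMatchingMatrix G (fun i j => i ∈ S ∧ G.Adj i j) := by
  refine ⟨hS.1.isMatchingMatrix_transmit, fun M' hM' hle => ?_⟩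
  ext i j
  refine ⟨fun hij => ⟨?_, hM'.1 i j hij⟩, hle i j⟩
  by_contra hi
  obtain ⟨w, hw, hiw⟩ := hS.2 i hi
  exact hM'.2 i j w hij (hle w i ⟨hw, hiw.symm⟩)

end TransmitMatrix

theorem maximalIndepSet_induces_maximalMatchingMatrices_general {V : Type*}
    (G : SimpleGraph V) (S : Set V) (hS : IsMaximalIndepSet G S) :
    IsMaximalMatchingMatrix G (fun i j => i ∈ S ∧ G.Adj i j) ∧
      IsMaximalMatchingMatrix G (fun i j => j ∈ S ∧ G.Adj i j) := by
  refine ⟨hS.isMaximalMatchingMatrix_transmit, ?_⟩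
  have hreceive : (fun i j => j ∈ S ∧ G.Adj i j) = flip (fun i j => i ∈ S ∧ G.Adj i j) := by
    ext i j
    simp only [flip, G.adj_comm]
  rw [hreceive]
  exact hS.isMaximalMatchingMatrix_transmit.flip

/-- Every maximal independent set `S` of a finite simple graph `G` induces two
maximal matching matrices: the transmit matrix `M i j := i ∈ S ∧ G.Adj i j`
and the receive matrix `M' i j := j ∈ S ∧ G.Adj i j`. -/
theorem maximalIndepSet_induces_maximalMatchingMatrices {V : Type*} [Fintype V]
    (G : SimpleGraph V) (S : Set V) (hS : IsMaximalIndepSet G S) :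
    IsMaximalMatchingMatrix G (fun i j => i ∈ S ∧ G.Adj i j) ∧
      IsMaximalMatchingMatrix G (fun i j => j ∈ S ∧ G.Adj i j) :=
  maximalIndepSet_induces_maximalMatchingMatrices_general G S hS
end

section
/- Not every maximal matching matrix is induced by a maximal independent set: let G be the simple graph on vertices {1,2,3,4,5} with edge set {{1,2},{1,3},{2,3},{3,4},{4,5}}, and let M be the relation with exactly the links 1→3, 2→3 and 5→4 (i.e., M i j holds precisely for (i,j) ∈ {(1,3),(2,3),(5,4)}). Then M is a maximal matching matrix for G, yet its set of transmitters {1,2,5} is not an independent set of G and its set of receivers {3,4} is not an independent set of G. -/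
/-- The five-node network of Fig. 2 (vertices `0,…,4` standing for `1,…,5`),
with edge set `{{1,2},{1,3},{2,3},{3,4},{4,5}}`. -/
def fiveNodeGraph : SimpleGraph (Fin 5) :=
  SimpleGraph.fromRel (fun i j =>
    (i = 0 ∧ j = 1) ∨ (i = 0 ∧ j = 2) ∨ (i = 1 ∧ j = 2) ∨
    (i = 2 ∧ j = 3) ∨ (i = 3 ∧ j = 4))

/-- The matching with exactly the links `1→3`, `2→3` and `5→4`
(in the `0`-based labelling: `0→2`, `1→2` and `4→3`). -/
def fiveNodeMatching : Fin 5 → Fin 5 → Prop :=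
  fun i j => (i = 0 ∧ j = 2) ∨ (i = 1 ∧ j = 2) ∨ (i = 4 ∧ j = 3)

/- A link `i → j` can be added to a matching matrix only if `i` is not a receiver and `j` is not a
transmitter; so a matching matrix that blocks every edge in both directions is maximal. In the
five-node network each unused direction of an edge starts at the receiver `3` or `4`, or ends at
the transmitter `1` or `2`. The transmitters `1, 2` and the receivers `3, 4` are adjacent. -/

theorem IsMatchingMatrix.isMaximal_of_forall_adj {V : Type*} {G : SimpleGraph V}
    {M : V → V → Prop} (hM : IsMatchingMatrix G M)
    (hblocked : ∀ i j, G.Adj i j → M i j ∨ (∃ k, M k i) ∨ ∃ l, M j l) :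
    IsMaximalMatchingMatrix G M := by
  refine ⟨hM, fun M' hM' hsub => ?_⟩
  funext i j
  refine propext ⟨fun hij => ?_, hsub i j⟩
  rcases hblocked i j (hM'.1 i j hij) with hlink | ⟨k, hki⟩ | ⟨l, hjl⟩
  · exact hlink
  · exact absurd (hsub k i hki) (hM'.2 i j k hij)
  · exact absurd hij (hM'.2 j l i (hsub j l hjl))

theorem not_isIndepSet_of_adj {V : Type*} {G : SimpleGraph V} {S : Set V} {i j : V}
    (hi : i ∈ S) (hj : j ∈ S) (hij : G.Adj i j) : ¬ IsIndepSet G S :=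
  fun hS => hS i hi j hj hij

theorem fiveNodeGraph_adj_iff (i j : Fin 5) :
    fiveNodeGraph.Adj i j ↔ i ≠ j ∧
      (((i = 0 ∧ j = 1) ∨ (i = 0 ∧ j = 2) ∨ (i = 1 ∧ j = 2) ∨ (i = 2 ∧ j = 3) ∨ (i = 3 ∧ j = 4)) ∨
        ((j = 0 ∧ i = 1) ∨ (j = 0 ∧ i = 2) ∨ (j = 1 ∧ i = 2) ∨ (j = 2 ∧ i = 3) ∨
          (j = 3 ∧ i = 4))) :=
  SimpleGraph.fromRel_adj _ _ _

theorem isMatchingMatrix_fiveNodeMatching : IsMatchingMatrix fiveNodeGraph fiveNodeMatching := by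
  simp only [IsMatchingMatrix, fiveNodeGraph_adj_iff, fiveNodeMatching]
  constructor <;> decide

theorem fiveNodeMatching_blocks_all_edges (i j : Fin 5) (hij : fiveNodeGraph.Adj i j) :
    fiveNodeMatching i j ∨ (∃ k, fiveNodeMatching k i) ∨ ∃ l, fiveNodeMatching j l := by
  rw [fiveNodeGraph_adj_iff] at hij
  revert i j
  simp only [fiveNodeMatching]
  decide

/-- Not every maximal matching matrix is induced by a maximal independent set:
the matching with links `1→3`, `2→3`, `5→4` in the five-node network is a
maximal matching matrix, yet its set of transmitters `{1,2,5}` and its set of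
receivers `{3,4}` are not independent sets. -/
theorem maximalMatching_not_from_indepSet :
    IsMaximalMatchingMatrix fiveNodeGraph fiveNodeMatching ∧
      ¬ IsIndepSet fiveNodeGraph {i | ∃ j, fiveNodeMatching i j} ∧
      ¬ IsIndepSet fiveNodeGraph {j | ∃ i, fiveNodeMatching i j} := by
  refine ⟨isMatchingMatrix_fiveNodeMatching.isMaximal_of_forall_adj
    fiveNodeMatching_blocks_all_edges, ?_, ?_⟩
  · exact not_isIndepSet_of_adj (i := 0) (j := 1) ⟨2, by simp [fiveNodeMatching]⟩
      ⟨2, by simp [fiveNodeMatching]⟩ ((fiveNodeGraph_adj_iff _ _).2 (by decide))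
  · exact not_isIndepSet_of_adj (i := 2) (j := 3) ⟨0, by simp [fiveNodeMatching]⟩
      ⟨4, by simp [fiveNodeMatching]⟩ ((fiveNodeGraph_adj_iff _ _).2 (by decide))
end

section
/- Bipartite MTR networks can be scheduled in T₁ + T₂ slots: let G be a finite simple graph whose vertex set is partitioned into sets A and B such that every edge of G joins a vertex of A and a vertex of B, and let T : V → V → ℕ be a traffic demand. Let T₁ := max over i ∈ A and j ∈ B of T i j, and T₂ := max over i ∈ B and j ∈ A of T i j. Then the two relations M_A i j := (i ∈ A and i adjacent to j) and M_B i j := (i ∈ B and i adjacent to j) are matching matrices for G, and the schedule assigning airtime T₁ to M_A and airtime T₂ to M_B meets T; hence there is a feasible schedule of total length T₁ + T₂. -/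
namespace SimpleGraph

variable {V : Type*} {G : SimpleGraph V}

theorem isMatchingMatrix_of_isIndepSet {S : Set V} (hS : G.IsIndepSet S) :
    IsMatchingMatrix G (fun i j => i ∈ S ∧ G.Adj i j) :=
  ⟨fun _ _ h => h.2, fun _ _ _ ⟨hi, _⟩ ⟨hk, hki⟩ => hS hk hi hki.ne hki⟩

theorem isIndepSet_of_forall_adj_mem {A B : Set V} (hAB : Disjoint A B)
    (hbip : ∀ i j, G.Adj i j → (i ∈ A ∧ j ∈ B) ∨ (i ∈ B ∧ j ∈ A)) :
    G.IsIndepSet A := by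
  intro i hi j hj _ hij
  rcases hbip i j hij with ⟨_, hjB⟩ | ⟨hiB, _⟩
  · exact Set.disjoint_left.1 hAB hj hjB
  · exact Set.disjoint_left.1 hAB hi hiB

end SimpleGraph

theorem Finset.le_univ_sup_ite {α : Type*} [Fintype α] {p : α → Prop} [DecidablePred p]
    (f : α → ℕ) {x : α} (hx : p x) :
    f x ≤ Finset.univ.sup fun y => if p y then f y else 0 := by
  simpa only [if_pos hx] using
    Finset.le_sup (f := fun y => if p y then f y else 0) (Finset.mem_univ x)

open Classical in
/-- Bipartite MTR networks can be scheduled in `T₁ + T₂` slots: if the vertex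
set is partitioned into `A` and `B` with every edge joining `A` and `B`, then
the relations `M_A i j := i ∈ A ∧ G.Adj i j` and `M_B i j := i ∈ B ∧ G.Adj i j`
are matching matrices, and the schedule giving airtime
`T₁ = max_{i ∈ A, j ∈ B} T i j` to `M_A` and `T₂ = max_{i ∈ B, j ∈ A} T i j`
to `M_B` meets the traffic demand `T`; hence there is a feasible schedule of
total length `T₁ + T₂`. -/
theorem bipartite_schedule {V : Type*} [Fintype V]
    (G : SimpleGraph V) (A B : Set V)
    (hpart : ∀ v, (v ∈ A ∨ v ∈ B) ∧ ¬ (v ∈ A ∧ v ∈ B))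
    (hbip : ∀ i j, G.Adj i j → (i ∈ A ∧ j ∈ B) ∨ (i ∈ B ∧ j ∈ A))
    (T : V → V → ℕ) (hT : ∀ i j, ¬ G.Adj i j → T i j = 0) :
    IsMatchingMatrix G (fun i j => i ∈ A ∧ G.Adj i j) ∧
    IsMatchingMatrix G (fun i j => i ∈ B ∧ G.Adj i j) ∧
    ∀ i j, T i j ≤
      (Finset.univ.sup fun p : V × V =>
          if p.1 ∈ A ∧ p.2 ∈ B then T p.1 p.2 else 0) *
        (if i ∈ A ∧ G.Adj i j then 1 else 0) +
      (Finset.univ.sup fun p : V × V =>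
          if p.1 ∈ B ∧ p.2 ∈ A then T p.1 p.2 else 0) *
        (if i ∈ B ∧ G.Adj i j then 1 else 0) := by
  have hAB : Disjoint A B := Set.disjoint_left.2 fun v hA hB => (hpart v).2 ⟨hA, hB⟩
  refine ⟨G.isMatchingMatrix_of_isIndepSet (G.isIndepSet_of_forall_adj_mem hAB hbip),
    G.isMatchingMatrix_of_isIndepSet
      (G.isIndepSet_of_forall_adj_mem hAB.symm fun i j h => (hbip i j h).symm),
    fun i j => ?_⟩
  by_cases hij : G.Adj i j
  · rcases hbip i j hij with ⟨hi, hj⟩ | ⟨hi, hj⟩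
    · rw [if_pos ⟨hi, hij⟩, mul_one]
      exact le_add_right <|
        Finset.le_univ_sup_ite (fun p : V × V => T p.1 p.2) (x := (i, j)) ⟨hi, hj⟩
    · rw [if_pos (show i ∈ B ∧ G.Adj i j from ⟨hi, hij⟩), mul_one]
      exact le_add_left <|
        Finset.le_univ_sup_ite (fun p : V × V => T p.1 p.2) (x := (i, j)) ⟨hi, hj⟩
  · simp [hT i j hij]
end

section
/- MTR can activate strictly more links than conventional half-duplex scheduling: let G be the simple graph on vertices {1,2,3,4} with edge set {{1,2},{1,3},{2,3},{3,4}}. Then the relation M with exactly the links 1→2, 1→3 and 4→3 is a matching matrix for G with 3 active links, whereas every set of directed links of G in which each node appears in at most one link (as transmitter or receiver) contains at most 2 links. -/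
/-- The four-node network of Fig. 1 (vertices `0,…,3` standing for `1,…,4`),
with edge set `{{1,2},{1,3},{2,3},{3,4}}`. -/
def fourNodeGraph : SimpleGraph (Fin 4) :=
  SimpleGraph.fromRel (fun i j =>
    (i = 0 ∧ j = 1) ∨ (i = 0 ∧ j = 2) ∨ (i = 1 ∧ j = 2) ∨ (i = 2 ∧ j = 3))

/-- The matching with exactly the links `1→2`, `1→3` and `4→3`
(in the `0`-based labelling: `0→1`, `0→2` and `3→2`). -/
def fourNodeMatching : Fin 4 → Fin 4 → Prop :=
  fun i j => (i = 0 ∧ j = 1) ∨ (i = 0 ∧ j = 2) ∨ (i = 3 ∧ j = 2)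

theorem fourNodeMatching_isMatchingMatrix :
    IsMatchingMatrix fourNodeGraph fourNodeMatching := by
  refine ⟨?_, ?_⟩
  · simp only [fourNodeGraph, fourNodeMatching, SimpleGraph.fromRel_adj]
    decide
  · simp only [fourNodeMatching]
    decide

theorem ncard_fourNodeMatching :
    Set.ncard {p : Fin 4 × Fin 4 | fourNodeMatching p.1 p.2} = 3 := by
  have hlinks : {p : Fin 4 × Fin 4 | fourNodeMatching p.1 p.2} = {(0, 1), (0, 2), (3, 2)} := by
    ext ⟨i, j⟩
    simp [fourNodeMatching]
  rw [hlinks, Set.ncard_eq_toFinset_card']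
  decide

theorem two_mul_ncard_le_card_of_pairwise_disjoint {V : Type*} [Finite V]
    (L : Set (V × V)) (hne : ∀ p ∈ L, p.1 ≠ p.2)
    (hdisj : ∀ p ∈ L, ∀ q ∈ L, p ≠ q →
      p.1 ≠ q.1 ∧ p.1 ≠ q.2 ∧ p.2 ≠ q.1 ∧ p.2 ≠ q.2) :
    2 * L.ncard ≤ Nat.card V := by
  let endpoint : L × Bool → V := fun x => if x.2 then x.1.1.1 else x.1.1.2
  have hinj : endpoint.Injective := by
    rintro ⟨⟨p, hp⟩, b⟩ ⟨⟨q, hq⟩, c⟩ h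
    by_cases hpq : p = q
    · subst hpq
      have h12 := hne p hp
      have h21 := h12.symm
      cases b <;> cases c <;> simp_all [endpoint]
    · obtain ⟨h11, h12, h21, h22⟩ := hdisj p hp q hq hpq
      cases b <;> cases c <;> simp_all [endpoint]
  simpa [Nat.card_prod, Nat.card_coe_set_eq, mul_comm] using
    Nat.card_le_card_of_injective endpoint hinj

/-- MTR can activate strictly more links than conventional half-duplex
scheduling: in the four-node network, the links `1→2`, `1→3`, `4→3` form a
matching matrix with 3 active links, whereas every set of directed links in
which each node appears in at most one link (as transmitter or receiver)
contains at most 2 links. -/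
theorem mtr_beats_conventional :
    IsMatchingMatrix fourNodeGraph fourNodeMatching ∧
    Set.ncard {p : Fin 4 × Fin 4 | fourNodeMatching p.1 p.2} = 3 ∧
    ∀ L : Set (Fin 4 × Fin 4),
      (∀ p ∈ L, fourNodeGraph.Adj p.1 p.2) →
      (∀ p ∈ L, ∀ q ∈ L, p ≠ q →
        p.1 ≠ q.1 ∧ p.1 ≠ q.2 ∧ p.2 ≠ q.1 ∧ p.2 ≠ q.2) →
      L.ncard ≤ 2 := by
  refine ⟨fourNodeMatching_isMatchingMatrix, ncard_fourNodeMatching, fun L hadj hdisj => ?_⟩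
  have := two_mul_ncard_le_card_of_pairwise_disjoint L (fun p hp => (hadj p hp).ne) hdisj
  rw [Nat.card_eq_fintype_card, Fintype.card_fin] at this
  omega
end
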